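/- Let n ∈ ℕ and κ₁ ≥ κ₂ ≥ ⋯ ≥ κ_n be integers. Let C : ℂ → M_n(ℂ) be a map whose entries c_{kj} are polynomial functions satisfying, for all j, k ∈ {1,…,n}: c_{kj} = 0 if κ_k < κ_j; c_{kj} is constant if κ_k = κ_j; and c_{kj} is a polynomial of degree ≤ κ_k − κ_j if κ_k > κ_j. Assume C(z) is invertible for every z ∈ ℂ. Then the entries of z ↦ C(z)⁻¹ are again polynomial functions satisfying the same three conditions (with respect to the same integers κ₁,…,κ_n). -/

import Mathlib

/-!
Call a polynomial matrix `M` bounded by weights `r, s` if every nonzero entry satisfies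
`deg M_{kj} ≤ r_k − s_j`. Each term `∏ᵢ M_{σ i, i}` of the Leibniz expansion then has degree at
most `∑ r − ∑ s`. For `r = s = κ` this makes `det C` constant, and nonzero since `C(z)` is
invertible. The cofactor `adj(C)_{kj}` is the determinant of `C` with row `j` replaced by the
`k`-th unit vector, which is bounded by `κ` updated to `κ_k` at `j`, so its degree is at most
`κ_k − κ_j`. Hence `C⁻¹ = (det C)⁻¹ • adj C` is bounded by `κ, κ`, and it evaluates to `C(z)⁻¹`.
-/

open Polynomial

namespace Polynomial

variable {R α : Type*} [CommRing R] {s : Finset α} {f : α → R[X]}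

theorem natDegree_sum_le_of_ne_zero {B : ℤ} (h : ∀ a ∈ s, f a ≠ 0 → ((f a).natDegree : ℤ) ≤ B)
    (hs : ∑ a ∈ s, f a ≠ 0) : ((∑ a ∈ s, f a).natDegree : ℤ) ≤ B := by
  obtain ⟨a, ha, hfa⟩ := Finset.exists_ne_zero_of_sum_ne_zero hs
  have hB : 0 ≤ B := (Int.natCast_nonneg _).trans (h a ha hfa)
  have : (∑ a ∈ s, f a).natDegree ≤ B.toNat := natDegree_sum_le_of_forall_le s f fun a ha => by
    by_cases hfa : f a = 0
    · simp [hfa]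
    · have := h a ha hfa
      omega
  omega

theorem natDegree_prod_le_of_ne_zero {B : α → ℤ}
    (h : ∀ a ∈ s, f a ≠ 0 → ((f a).natDegree : ℤ) ≤ B a) (hs : ∏ a ∈ s, f a ≠ 0) :
    ((∏ a ∈ s, f a).natDegree : ℤ) ≤ ∑ a ∈ s, B a :=
  calc ((∏ a ∈ s, f a).natDegree : ℤ) ≤ ∑ a ∈ s, ((f a).natDegree : ℤ) := by
        exact_mod_cast natDegree_prod_le s f
    _ ≤ ∑ a ∈ s, B a :=
        Finset.sum_le_sum fun a ha => h a ha fun h0 => hs (Finset.prod_eq_zero ha h0)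

theorem natDegree_units_int_smul (u : ℤˣ) (p : R[X]) : (u • p).natDegree = p.natDegree := by
  rcases Int.units_eq_one_or u with rfl | rfl <;> simp

end Polynomial

namespace Matrix

variable {R m n ι : Type*} [CommRing R]

def EntryDegreeLE (r : m → ℤ) (s : n → ℤ) (M : Matrix m n R[X]) : Prop :=
  ∀ i j, M i j ≠ 0 → ((M i j).natDegree : ℤ) ≤ r i - s j

theorem entryDegreeLE_iff {r : m → ℤ} {s : n → ℤ} {M : Matrix m n R[X]} :
    M.EntryDegreeLE r s ↔
      (∀ i j, r i < s j → M i j = 0) ∧ (∀ i j, r i = s j → (M i j).degree ≤ 0) ∧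
        (∀ i j, s j < r i → (M i j).degree ≤ ((r i - s j).toNat : ℕ)) := by
  refine ⟨fun hM => ⟨fun i j hij => ?_, fun i j hij => ?_, fun i j hij => ?_⟩,
    fun ⟨h0, hconst, hdeg⟩ i j hne => ?_⟩
  · by_contra hne
    have := hM i j hne
    omega
  · by_cases hne : M i j = 0
    · simp [hne]
    · have := hM i j hne
      exact natDegree_eq_zero_iff_degree_le_zero.mp (by omega)
  · by_cases hne : M i j = 0
    · simp [hne]
    · have := hM i j hne
      exact degree_le_natDegree.trans (by exact_mod_cast (by omega : _ ≤ (r i - s j).toNat))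
  · rcases lt_trichotomy (r i) (s j) with h | h | h
    · exact absurd (h0 i j h) hne
    · have := natDegree_eq_zero_iff_degree_le_zero.mpr (hconst i j h)
      omega
    · have := natDegree_le_iff_degree_le.mpr (hdeg i j h)
      omega

theorem EntryDegreeLE.smul {r : m → ℤ} {s : n → ℤ} {a : R[X]} {M : Matrix m n R[X]} (ha : a.natDegree = 0)
    (hM : M.EntryDegreeLE r s) : (a • M).EntryDegreeLE r s := by
  intro i j hij
  rw [smul_apply, smul_eq_mul] at hij ⊢
  have := natDegree_mul_le (p := a) (q := M i j)
  have := hM i j (right_ne_zero_of_mul hij)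
  omega

variable [Fintype ι] [DecidableEq ι] {κ : ι → ℤ} {M : Matrix ι ι R[X]}

theorem EntryDegreeLE.natDegree_det_le {r s : ι → ℤ} (hM : M.EntryDegreeLE r s)
    (hdet : M.det ≠ 0) : (M.det.natDegree : ℤ) ≤ ∑ i, r i - ∑ i, s i := by
  rw [det_apply] at hdet ⊢
  refine natDegree_sum_le_of_ne_zero (fun σ _ hσ => ?_) hdet
  have hprod : ∏ i, M (σ i) i ≠ 0 := fun h => hσ (by rw [h, smul_zero])
  calc ((Equiv.Perm.sign σ • ∏ i, M (σ i) i).natDegree : ℤ)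
      = ((∏ i, M (σ i) i).natDegree : ℤ) := by rw [natDegree_units_int_smul]
    _ ≤ ∑ i, (r (σ i) - s i) := natDegree_prod_le_of_ne_zero (fun i _ => hM _ _) hprod
    _ = ∑ i, r i - ∑ i, s i := by rw [Finset.sum_sub_distrib, Equiv.sum_comp σ r]

theorem EntryDegreeLE.natDegree_det_eq_zero (hM : M.EntryDegreeLE κ κ) : M.det.natDegree = 0 := by
  by_cases hdet : M.det = 0
  · simp [hdet]
  · have := hM.natDegree_det_le hdet
    omega

theorem EntryDegreeLE.adjugate (hM : M.EntryDegreeLE κ κ) : M.adjugate.EntryDegreeLE κ κ := by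
  intro k j hkj
  rw [adjugate_apply] at hkj ⊢
  have hrow : (M.updateRow j (Pi.single k 1)).EntryDegreeLE (Function.update κ j (κ k)) κ := by
    intro i l hil
    rcases eq_or_ne i j with rfl | hij
    · rw [updateRow_self] at hil ⊢
      rcases eq_or_ne l k with rfl | hlk
      · simp
      · simp [hlk] at hil
    · rw [updateRow_ne hij] at hil ⊢
      simpa [hij] using hM i l hil
  have := hrow.natDegree_det_le hkj
  rw [Finset.sum_update_of_mem (Finset.mem_univ j), Finset.sdiff_singleton_eq_erase,
    ← Finset.add_sum_erase _ κ (Finset.mem_univ j)] at this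
  linarith

theorem EntryDegreeLE.inv [IsDomain R] (hM : M.EntryDegreeLE κ κ) : M⁻¹.EntryDegreeLE κ κ := by
  rw [inv_def]
  refine hM.adjugate.smul ?_
  by_cases hdet : IsUnit M.det
  · exact natDegree_eq_zero_of_isUnit hdet.ringInverse
  · rw [Ring.inverse_non_unit _ hdet, natDegree_zero]

theorem map_nonsing_inv {S : Type*} [CommRing S] (f : R →+* S) (A : Matrix ι ι R)
    (h : IsUnit A.det) : A⁻¹.map f = (A.map f)⁻¹ :=
  (inv_eq_left_inv (by
    rw [← Matrix.map_mul, nonsing_inv_mul A h, Matrix.map_one f f.map_zero f.map_one])).symm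

end Matrix

open Matrix in
theorem stmt_17 (n : ℕ) (κ : Fin n → ℤ)
    (p : Fin n → Fin n → Polynomial ℂ)
    (h0 : ∀ k j, κ k < κ j → p k j = 0)
    (hconst : ∀ k j, κ k = κ j → (p k j).degree ≤ 0)
    (hdeg : ∀ k j, κ j < κ k → (p k j).degree ≤ ((κ k - κ j).toNat : ℕ))
    (hinv : ∀ z : ℂ, IsUnit (Matrix.of fun k j => (p k j).eval z)) :
    ∃ q : Fin n → Fin n → Polynomial ℂ,
      (∀ z : ℂ, (Matrix.of fun k j => (q k j).eval z) =
        (Matrix.of fun k j => (p k j).eval z)⁻¹) ∧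
      (∀ k j, κ k < κ j → q k j = 0) ∧
      (∀ k j, κ k = κ j → (q k j).degree ≤ 0) ∧
      (∀ k j, κ j < κ k → (q k j).degree ≤ ((κ k - κ j).toNat : ℕ)) := by
  set A : Matrix (Fin n) (Fin n) ℂ[X] := Matrix.of p
  have hA : A.EntryDegreeLE κ κ := entryDegreeLE_iff.mpr ⟨h0, hconst, hdeg⟩
  have hdet : IsUnit A.det := by
    rw [eq_C_of_natDegree_eq_zero hA.natDegree_det_eq_zero, isUnit_C, coeff_zero_eq_eval_zero,
      ← coe_evalRingHom, RingHom.map_det]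
    exact (isUnit_iff_isUnit_det _).mp (hinv 0)
  refine ⟨fun k j => A⁻¹ k j, fun z => ?_, entryDegreeLE_iff.mp hA.inv⟩
  exact map_nonsing_inv (evalRingHom z) A hdet
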